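/- arXiv:2310.18150 — 3 statements merged into one kernel-verified Lean document; each statement's English description precedes it below -/
import Mathlib

section
/- Let V : ℝ → ℝ be V(t) = ‖s(t)‖² where s is a differentiable curve in ℝᵐ with s'(t) = z(t) - κ₁ s(t) - w(t), where ‖z(t)‖ ≤ L, sᵀ(t) w₀(t) ≥ λ ‖s(t)‖² for a decomposition w(t) = w₀(t) + w₁(t) with ‖w₁(t)‖ ≤ M. Then V'(t) < 0 whenever ‖s(t)‖ > (L + M)/λ (assuming κ₁ ≥ 0, λ > 0). -/
open scoped RealInnerProductSpace

theorem real_inner_sub_smul_sub_add_le {E : Type*} [NormedAddCommGroup E] [InnerProductSpace ℝ E]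
    {s z w₀ w₁ : E} {κ lam L M : ℝ} (hκ : 0 ≤ κ) (hz : ‖z‖ ≤ L)
    (hw₀ : lam * ‖s‖ ^ 2 ≤ ⟪s, w₀⟫) (hw₁ : ‖w₁‖ ≤ M) :
    ⟪s, z - κ • s - (w₀ + w₁)⟫ ≤ (L + M - lam * ‖s‖) * ‖s‖ := by
  have hsz : ⟪s, z⟫ ≤ ‖s‖ * L :=
    (real_inner_le_norm s z).trans (mul_le_mul_of_nonneg_left hz (norm_nonneg s))
  have hsw₁ : -⟪s, w₁⟫ ≤ ‖s‖ * M :=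
    ((neg_le_abs _).trans (abs_real_inner_le_norm s w₁)).trans
      (mul_le_mul_of_nonneg_left hw₁ (norm_nonneg s))
  have hκs : 0 ≤ κ * ‖s‖ ^ 2 := by positivity
  rw [inner_sub_right, inner_sub_right, inner_add_right, real_inner_smul_right,
    real_inner_self_eq_norm_sq]
  linarith

theorem stmt9_general {m : ℕ} (s z w w₀ w₁ : ℝ → EuclideanSpace ℝ (Fin m))
    (κ₁ lam L M : ℝ) (hκ : 0 ≤ κ₁) (hlam : 0 < lam)
    (hs : ∀ t, HasDerivAt s (z t - κ₁ • s t - w t) t)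
    (hw : ∀ t, w t = w₀ t + w₁ t)
    (hz : ∀ t, ‖z t‖ ≤ L)
    (hw₀ : ∀ t, lam * ‖s t‖ ^ 2 ≤ ⟪s t, w₀ t⟫)
    (hw₁ : ∀ t, ‖w₁ t‖ ≤ M) :
    ∀ t, (L + M) / lam < ‖s t‖ → deriv (fun τ => ‖s τ‖ ^ 2) t < 0 := by
  intro t ht
  have hLM : 0 ≤ L + M :=
    add_nonneg ((norm_nonneg _).trans (hz t)) ((norm_nonneg _).trans (hw₁ t))
  have hs_pos : 0 < ‖s t‖ := (div_nonneg hLM hlam.le).trans_lt ht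
  have hgap : L + M - lam * ‖s t‖ < 0 := by
    rw [div_lt_iff₀ hlam] at ht
    linarith
  rw [(hs t).norm_sq.deriv, hw t]
  have hbound := real_inner_sub_smul_sub_add_le hκ (hz t) (hw₀ t) (hw₁ t)
  linarith [mul_neg_of_neg_of_pos hgap hs_pos]

/-- Lyapunov derivative bound: if `s' = z - κ₁ s - w` with `‖z‖ ≤ L`,
`w = w₀ + w₁`, `⟪s, w₀⟫ ≥ λ ‖s‖²`, `‖w₁‖ ≤ M`, `κ₁ ≥ 0`, `λ > 0`, then
`V = ‖s‖²` has negative derivative whenever `‖s‖ > (L + M)/λ`. -/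
theorem stmt9 {m : ℕ} (s z w w₀ w₁ : ℝ → EuclideanSpace ℝ (Fin m))
    (κ₁ lam L M : ℝ) (hκ : 0 ≤ κ₁) (hlam : 0 < lam) (hL : 0 ≤ L) (hM : 0 ≤ M)
    (hs : ∀ t, HasDerivAt s (z t - κ₁ • s t - w t) t)
    (hw : ∀ t, w t = w₀ t + w₁ t)
    (hz : ∀ t, ‖z t‖ ≤ L)
    (hw₀ : ∀ t, lam * ‖s t‖ ^ 2 ≤ ⟪s t, w₀ t⟫)
    (hw₁ : ∀ t, ‖w₁ t‖ ≤ M) :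
    ∀ t, (L + M) / lam < ‖s t‖ → deriv (fun τ => ‖s τ‖ ^ 2) t < 0 :=
  stmt9_general s z w w₀ w₁ κ₁ lam L M hκ hlam hs hw hz hw₀ hw₁
end

section
/- Let s : ℝ → ℝᵐ be continuously differentiable and suppose there exist c > 0 and R ≥ 0 such that d/dt ‖s(t)‖² ≤ -c ‖s(t)‖² whenever ‖s(t)‖ > R. Then for every ε > 0 there exists T ≥ 0 such that ‖s(t)‖ ≤ R + ε for all t ≥ T (an ultimate boundedness / practical stability result). -/
/-!
Along the trajectory, `V = ‖s‖²` decreases at rate at least `c (R + ε)²` as long as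
`‖s‖ > R + ε`, so it drops to `(R + ε)²` in finite time; and it can never climb back above
that level, since at a first crossing of any level `(R + ε)² + δ` it would have to be
decreasing.
-/

open Set

section

variable {V : ℝ → ℝ} {a B : ℝ}

theorem forall_ge_le_of_le_of_deriv_neg (hV : Differentiable ℝ V) (ha : V a ≤ B)
    (hderiv : ∀ t ≥ a, B < V t → deriv V t < 0) : ∀ t ≥ a, V t ≤ B := by
  intro t ht
  refine le_of_forall_pos_le_add fun δ hδ => ?_
  refine image_le_of_deriv_right_lt_deriv_boundary (B := fun _ => B + δ) (B' := fun _ => 0)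
    hV.continuous.continuousOn (fun x _ => (hV x).hasDerivAt.hasDerivWithinAt)
    (by linarith) (fun _ => hasDerivAt_const _ _) (fun x hx hVx => ?_) ⟨ht, le_rfl⟩
  exact hderiv x hx.1 (by linarith)

theorem exists_ge_le_of_deriv_le_neg {k : ℝ} (hV : Differentiable ℝ V) (hk : 0 < k)
    (hderiv : ∀ t ≥ a, B < V t → deriv V t ≤ -k) : ∃ t ≥ a, V t ≤ B := by
  by_contra! hgt
  set t := a + (V a - B) / k
  have hat : a ≤ t := le_add_of_nonneg_right (div_nonneg (sub_pos.2 (hgt a le_rfl)).le hk.le)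
  have hdrop : V t - V a ≤ -k * (t - a) :=
    (convex_Icc a t).image_sub_le_mul_sub_of_deriv_le hV.continuous.continuousOn
      hV.differentiableOn (fun x hx => by
        rw [interior_Icc] at hx
        exact hderiv x hx.1.le (hgt x hx.1.le))
      a ⟨le_rfl, hat⟩ t ⟨hat, le_rfl⟩ hat
  have hkt : k * (t - a) = V a - B := by
    simp only [t, add_sub_cancel_left]
    field_simp
  linarith [hgt t hat]

theorem exists_forall_ge_le_of_deriv_le_neg {k : ℝ} (hV : Differentiable ℝ V) (hk : 0 < k)
    (hderiv : ∀ t ≥ a, B < V t → deriv V t ≤ -k) : ∃ T ≥ a, ∀ t ≥ T, V t ≤ B := by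
  obtain ⟨T, haT, hT⟩ := exists_ge_le_of_deriv_le_neg hV hk hderiv
  refine ⟨T, haT, forall_ge_le_of_le_of_deriv_neg hV hT fun t ht hBt => ?_⟩
  linarith [hderiv t (haT.trans ht) hBt]

end

/-- Ultimate boundedness: if `s` is `C¹` and `d/dt ‖s‖² ≤ -c ‖s‖²` whenever
`‖s‖ > R`, then for every `ε > 0` there is `T ≥ 0` with `‖s t‖ ≤ R + ε` for all
`t ≥ T`. -/
theorem stmt10 {m : ℕ} (s : ℝ → EuclideanSpace ℝ (Fin m)) (c R : ℝ)
    (hc : 0 < c) (hR : 0 ≤ R) (hs : ContDiff ℝ 1 s)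
    (hineq : ∀ t ≥ (0:ℝ), R < ‖s t‖ →
      deriv (fun τ => ‖s τ‖ ^ 2) t ≤ -c * ‖s t‖ ^ 2) :
    ∀ ε > (0:ℝ), ∃ T ≥ (0:ℝ), ∀ t ≥ T, ‖s t‖ ≤ R + ε := by
  intro ε hε
  have hRε : 0 < R + ε := by linarith
  have hV : Differentiable ℝ fun τ => ‖s τ‖ ^ 2 := (hs.norm_sq ℝ).differentiable one_ne_zero
  obtain ⟨T, hT, hle⟩ := exists_forall_ge_le_of_deriv_le_neg (k := c * (R + ε) ^ 2)
    hV (by positivity) fun t ht hgt => by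
      have hnorm : R + ε < ‖s t‖ := lt_of_pow_lt_pow_left₀ 2 (norm_nonneg _) hgt
      calc deriv (fun τ => ‖s τ‖ ^ 2) t ≤ -c * ‖s t‖ ^ 2 := hineq t ht (by linarith)
        _ ≤ -(c * (R + ε) ^ 2) := by nlinarith
  exact ⟨T, hT, fun t ht => le_of_pow_le_pow_left₀ two_ne_zero hRε.le (hle t ht)⟩
end

section
/- Let G be a connected graph on N vertices with Laplacian Q, H = I - (1/N)𝟙𝟙ᵀ, and suppose s̃ : ℝ → ℝᴺ satisfies s̃'(t) = z̃(t) - κ₁ s̃(t) - κ₂ Q s̃(t) - d(t) with Hs̃(t) = s̃(t) (i.e., s̃ ⊥ 𝟙), ‖z̃(t)‖ ≤ L', ‖d(t)‖ ≤ D. Then d/dt ‖s̃(t)‖² ≤ 2‖s̃(t)‖ (L' + D - κ₂ λ₂ ‖s̃(t)‖) where λ₂ > 0 is the algebraic connectivity; consequently ‖s̃(t)‖ eventually satisfies ‖s̃(t)‖ ≤ (L' + D)/(κ₂ λ₂) + ε for any ε > 0. -/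
open Matrix

open scoped RealInnerProductSpace

/-!
Differentiating `‖s̃‖²` along the flow gives `2⟪s̃, z̃ - κ₁ s̃ - κ₂ Q s̃ - d⟫`; Cauchy–Schwarz
bounds the disturbance terms, the damping term is nonpositive, and the spectral gap of `Q`
on `𝟙ᗮ` gives `⟪s̃, Q s̃⟫ ≥ λ₂ ‖s̃‖²`. Outside the ball of radius `B = (L' + D)/(κ₂ λ₂) + ε`
the derivative of `‖s̃‖²` is then at most `-2 B κ₂ λ₂ ε < 0`, so `‖s̃‖²` enters the ball in
finite time and cannot leave it again.
-/

theorem inner_sub_smul_sub_smul_sub_le {E : Type*} [NormedAddCommGroup E]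
    [InnerProductSpace ℝ E] {s z w d : E} {κ₁ κ₂ lam L D : ℝ} (hκ₁ : 0 ≤ κ₁) (hκ₂ : 0 ≤ κ₂)
    (hw : lam * ‖s‖ ^ 2 ≤ ⟪s, w⟫) (hz : ‖z‖ ≤ L) (hd : ‖d‖ ≤ D) :
    ⟪s, z - κ₁ • s - κ₂ • w - d⟫ ≤ ‖s‖ * (L + D - κ₂ * lam * ‖s‖) := by
  have hsz : ⟪s, z⟫ ≤ ‖s‖ * L :=
    (real_inner_le_norm s z).trans (mul_le_mul_of_nonneg_left hz (norm_nonneg s))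
  have hsd : -⟪s, d⟫ ≤ ‖s‖ * D := by
    simpa [inner_neg_right] using
      (real_inner_le_norm s (-d)).trans (mul_le_mul_of_nonneg_left ((norm_neg d).trans_le hd) (norm_nonneg s))
  have hss : 0 ≤ κ₁ * ⟪s, s⟫ := mul_nonneg hκ₁ real_inner_self_nonneg
  simp only [inner_sub_right, inner_smul_right]
  nlinarith [mul_le_mul_of_nonneg_left hw hκ₂]

theorem exists_forall_ge_le_of_hasDerivAt_le_neg {V V' : ℝ → ℝ}
    (hV : ∀ t, HasDerivAt V (V' t) t) {m r c : ℝ} (hm : ∀ t, m ≤ V t) (hc : 0 < c)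
    (hdec : ∀ t, r ≤ V t → V' t ≤ -c) : ∃ T, ∀ t ≥ T, V t ≤ r := by
  have hdiff : Differentiable ℝ V := fun t => (hV t).differentiableAt
  obtain ⟨T, hT⟩ : ∃ T, V T ≤ r := by
    by_contra! hgt
    have hslope : ∀ t, deriv V t ≤ -c := fun t => (hV t).deriv ▸ hdec t (hgt t).le
    set t₁ := (V 0 - m) / c + 1
    have hdrop : V t₁ - V 0 ≤ -c * t₁ := by
      simpa using image_sub_le_mul_sub_of_deriv_le hdiff hslope (x := 0) (y := t₁)
        (add_nonneg (div_nonneg (sub_nonneg.2 (hm 0)) hc.le) zero_le_one)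
    have hct₁ : c * t₁ = V 0 - m + c := by simp only [t₁]; field_simp
    linarith [hm t₁]
  refine ⟨T, fun t ht => ?_⟩
  refine image_le_of_deriv_right_lt_deriv_boundary (a := T) (b := t) (B := fun _ => r)
    hdiff.continuous.continuousOn (fun x _ => (hV x).hasDerivWithinAt) hT
    (fun _ => hasDerivAt_const _ r) (fun x _ hx => ?_) ⟨ht, le_rfl⟩
  linarith [hdec x hx.ge]

theorem exists_forall_ge_le_of_hasDerivAt_sq_le {u V' : ℝ → ℝ} (hu : ∀ t, 0 ≤ u t)
    (hV : ∀ t, HasDerivAt (fun τ => u τ ^ 2) (V' t) t) {a b ε : ℝ} (ha : 0 ≤ a) (hb : 0 < b)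
    (hε : 0 < ε) (hV' : ∀ t, V' t ≤ 2 * u t * (a - b * u t)) :
    ∃ T, ∀ t ≥ T, u t ≤ a / b + ε := by
  set B := a / b + ε
  have hB : 0 < B := by positivity
  have hbB : b * B = a + b * ε := by simp only [B]; field_simp
  have hdec : ∀ t, B ^ 2 ≤ u t ^ 2 → V' t ≤ -(2 * B * (b * ε)) := by
    intro t ht
    have hBu : B ≤ u t := le_of_sq_le_sq ht (hu t)
    nlinarith [hV' t, mul_le_mul_of_nonneg_left hBu hb.le]
  obtain ⟨T, hT⟩ := exists_forall_ge_le_of_hasDerivAt_le_neg hV (fun t => sq_nonneg (u t))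
    (by positivity) hdec
  exact ⟨T, fun t ht => le_of_sq_le_sq (hT t ht) hB.le⟩

theorem stmt16_general {N : ℕ} (Q : Matrix (Fin N) (Fin N) ℝ)
    (lam2 : ℝ) (hlam2 : 0 < lam2)
    (hQgap : ∀ v : EuclideanSpace ℝ (Fin N), (∑ i, v i) = 0 →
      lam2 * ‖v‖ ^ 2 ≤ ⟪v, Matrix.toEuclideanLin Q v⟫)
    (κ₁ κ₂ L' D : ℝ) (hκ₁ : 0 ≤ κ₁) (hκ₂ : 0 < κ₂) (hL : 0 ≤ L') (hD : 0 ≤ D)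
    (stil ztil d : ℝ → EuclideanSpace ℝ (Fin N))
    (hperp : ∀ t, (∑ i, stil t i) = 0)
    (hz : ∀ t, ‖ztil t‖ ≤ L') (hd : ∀ t, ‖d t‖ ≤ D)
    (hderiv : ∀ t, HasDerivAt stil
      (ztil t - κ₁ • stil t - κ₂ • (Matrix.toEuclideanLin Q (stil t)) - d t) t) :
    (∀ t, deriv (fun τ => ‖stil τ‖ ^ 2) t ≤
        2 * ‖stil t‖ * (L' + D - κ₂ * lam2 * ‖stil t‖)) ∧
    ∀ ε > (0:ℝ), ∃ T, ∀ t ≥ T, ‖stil t‖ ≤ (L' + D) / (κ₂ * lam2) + ε := by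
  have hV t := (hderiv t).norm_sq
  have hV' t : 2 * ⟪stil t, ztil t - κ₁ • stil t - κ₂ • (Matrix.toEuclideanLin Q (stil t))
      - d t⟫ ≤ 2 * ‖stil t‖ * (L' + D - κ₂ * lam2 * ‖stil t‖) := by
    rw [mul_assoc]
    gcongr
    exact inner_sub_smul_sub_smul_sub_le hκ₁ hκ₂.le (hQgap _ (hperp t)) (hz t) (hd t)
  refine ⟨fun t => (hV t).deriv ▸ hV' t, fun ε hε => ?_⟩
  exact exists_forall_ge_le_of_hasDerivAt_sq_le (fun t => norm_nonneg _) hV (by positivity)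
    (mul_pos hκ₂ hlam2) hε (fun t => (hV' t).trans_eq (by ring))

/-- Consensus-error dynamics: if `s̃' = z̃ - κ₁ s̃ - κ₂ Q s̃ - d` with `s̃ ⊥ 𝟙`,
`‖z̃‖ ≤ L'`, `‖d‖ ≤ D`, and `Q` a Laplacian with algebraic connectivity `λ₂ > 0`,
then `d/dt ‖s̃‖² ≤ 2‖s̃‖ (L' + D - κ₂ λ₂ ‖s̃‖)`, and consequently `‖s̃ t‖` is
ultimately bounded by `(L' + D)/(κ₂ λ₂) + ε` for any `ε > 0`. -/
theorem stmt16 {N : ℕ} (Q : Matrix (Fin N) (Fin N) ℝ) (hQsym : Q.IsSymm)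
    (hQ1 : Q *ᵥ (fun _ => (1:ℝ)) = 0)
    (lam2 : ℝ) (hlam2 : 0 < lam2)
    (hQgap : ∀ v : EuclideanSpace ℝ (Fin N), (∑ i, v i) = 0 →
      lam2 * ‖v‖ ^ 2 ≤ ⟪v, Matrix.toEuclideanLin Q v⟫)
    (κ₁ κ₂ L' D : ℝ) (hκ₁ : 0 ≤ κ₁) (hκ₂ : 0 < κ₂) (hL : 0 ≤ L') (hD : 0 ≤ D)
    (stil ztil d : ℝ → EuclideanSpace ℝ (Fin N))
    (hperp : ∀ t, (∑ i, stil t i) = 0)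
    (hz : ∀ t, ‖ztil t‖ ≤ L') (hd : ∀ t, ‖d t‖ ≤ D)
    (hderiv : ∀ t, HasDerivAt stil
      (ztil t - κ₁ • stil t - κ₂ • (Matrix.toEuclideanLin Q (stil t)) - d t) t) :
    (∀ t, deriv (fun τ => ‖stil τ‖ ^ 2) t ≤
        2 * ‖stil t‖ * (L' + D - κ₂ * lam2 * ‖stil t‖)) ∧
    ∀ ε > (0:ℝ), ∃ T, ∀ t ≥ T, ‖stil t‖ ≤ (L' + D) / (κ₂ * lam2) + ε :=
  stmt16_general Q lam2 hlam2 hQgap κ₁ κ₂ L' D hκ₁ hκ₂ hL hD stil ztil d hperp hz hd hderiv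
end
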